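/- Hadamard's gamma function satisfies the recurrence H(z+1) = z·H(z) + 1/Γ(1−z) for all z ∈ ℂ where both sides are defined (with 1/Γ(1−z) interpreted as 0 at poles of Γ(1−z)). -/

import Mathlib

open Complex

noncomputable def digamma (z : ℂ) : ℂ := deriv Complex.Gamma z / Complex.Gamma z

noncomputable def H (z : ℂ) : ℂ :=
  Complex.Gamma z *
    (1 + Complex.sin (Real.pi * z) / (2 * Real.pi) * (_root_.digamma (z / 2) - _root_.digamma ((z + 1) / 2)))

/-!
Passing from `z` to `z + 1` multiplies `Γ` by `z`, flips the sign of `sin (π z)` and swaps the two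
digamma arguments, the new one being `z / 2 + 1`, where `ψ (z / 2 + 1) = ψ (z / 2) + 2 / z`.
Everything cancels except `Γ(z) sin(πz) / π`, which is `1 / Γ(1 - z)` by Euler's reflection formula.
-/

open scoped Real

theorem digamma_eq_complex_digamma : _root_.digamma = Complex.digamma :=
  funext fun z => (logDeriv_apply Gamma z).symm

/-- At the poles of `Γ(1 - z)` both sides vanish, `Γ` being `0` there by convention. -/
theorem Complex.one_div_Gamma_one_sub {z : ℂ} (hz : ∀ m : ℕ, z ≠ -m) :
    1 / Gamma (1 - z) = Gamma z * sin (π * z) / π := by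
  rcases eq_or_ne (Gamma (1 - z)) 0 with hpole | hΓ
  · obtain ⟨m, hm⟩ := (Gamma_eq_zero_iff _).1 hpole
    have hzm : z = (m + 1 : ℕ) := by push_cast; linear_combination -hm
    rw [hpole, hzm, mul_comm (π : ℂ), sin_nat_mul_pi]
    simp
  · have hrefl := Gamma_mul_Gamma_one_sub z
    have hsin : sin (π * z) ≠ 0 := by
      intro hsin
      rw [hsin, div_zero] at hrefl
      exact mul_ne_zero (Gamma_ne_zero hz) hΓ hrefl
    rw [eq_div_iff hsin] at hrefl
    rw [div_eq_div_iff hΓ (ofReal_ne_zero.mpr Real.pi_ne_zero)]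
    linear_combination -hrefl

theorem H_recurrence (z : ℂ) (hz : ∀ m : ℕ, z ≠ -(m : ℂ)) :
    H (z + 1) = z * H z + 1 / Complex.Gamma (1 - z) := by
  have hz0 : z ≠ 0 := by simpa using hz 0
  have hz2 : ∀ m : ℕ, z / 2 ≠ -m := fun m h => hz (2 * m) (by push_cast; linear_combination 2 * h)
  have hsin : sin (π * (z + 1)) = -sin (π * z) := by rw [mul_add_one, sin_add_pi]
  unfold H
  rw [show (z + 1 + 1) / 2 = z / 2 + 1 by ring, digamma_eq_complex_digamma,
    Complex.digamma_apply_add_one _ hz2, hsin, Gamma_add_one z hz0, one_div_Gamma_one_sub hz]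
  field_simp
  ring
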